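/- The map ξ : ℂ* → ℂ² given by ξ(t) = ((t² + t + 2/3)·t⁴, (t² − t + 1/3)·t^{−8}) is injective. -/

import Mathlib

/-!
Writing `s = x + y` and `p = x y`, the difference quotients of both coordinates of `ξ` between
`x` and `y` are polynomials in `s` and `p`. These two polynomials vanish simultaneously only
when `p = 0`: modulo the first one, the second equals `s²` times a cubic in `p`, and already the
first polynomial together with that cubic generates `3 p⁴`. Hence `ξ x = ξ y` with `x ≠ y`
forces `x y = 0`.
-/

section SlopePolynomials

variable {R : Type*} [CommRing R]

/-- `3 (f x - f y) / (x - y)` for `f t = (t² + t + 2/3) t⁴`, in terms of `s = x + y`, `p = x y`. -/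
def firstSlope (s p : R) : R :=
  3 * s ^ 5 + 3 * s ^ 4 + 2 * s ^ 3 - 12 * s ^ 3 * p - 9 * s ^ 2 * p - 4 * s * p
    + 9 * s * p ^ 2 + 3 * p ^ 2

/-- `3 (g y - g x) x⁸ y⁸ / (x - y)` for `g t = (t² - t + 1/3) t⁻⁸`, in terms of `s = x + y`,
`p = x y`. -/
def secondSlope (s p : R) : R :=
  s ^ 7 - 3 * s ^ 6 * p + 3 * s ^ 5 * p ^ 2 - 6 * s ^ 5 * p + 15 * s ^ 4 * p ^ 2
    - 12 * s ^ 3 * p ^ 3 + 10 * s ^ 3 * p ^ 2 - 18 * s ^ 2 * p ^ 3 + 9 * s * p ^ 4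
    - 4 * s * p ^ 3 + 3 * p ^ 4

theorem eq_zero_of_firstSlope_eq_zero_of_secondSlope_eq_zero [IsDomain R] (h3 : (3 : R) ≠ 0)
    {s p : R} (hF : firstSlope s p = 0) (hG : secondSlope s p = 0) : p = 0 := by
  unfold firstSlope at hF
  unfold secondSlope at hG
  have hsH : s ^ 2 * (s ^ 5 - 3 * s ^ 4 * p - 6 * s ^ 3 * p + 12 * s ^ 2 * p ^ 2
      + 8 * s * p ^ 2 - 9 * p ^ 3) = 0 := by
    linear_combination hG - p ^ 2 * hF
  rcases mul_eq_zero.mp hsH with hs | hH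
  · obtain rfl : s = 0 := pow_eq_zero_iff two_ne_zero |>.mp hs
    have h3p : 3 * p ^ 2 = 0 := by linear_combination hF
    exact pow_eq_zero_iff two_ne_zero |>.mp ((mul_eq_zero.mp h3p).resolve_left h3)
  · have h3p : 3 * p ^ 4 = 0 := by
      linear_combination
        (2 * s ^ 4 - 9 * s ^ 3 * p + 9 * s ^ 2 * p ^ 2 - 2 * s ^ 3 - 3 * s ^ 2 * p
          + 30 * s * p ^ 2 - 27 * p ^ 3 + 8 * s * p - 11 * p ^ 2) * hF
        + (-6 * s ^ 4 + 9 * s ^ 3 * p + 24 * s ^ 2 * p - 27 * s * p ^ 2 + 2 * s ^ 2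
          + 3 * s * p - 9 * p ^ 2 + 4 * s - 4 * p) * hH
    exact pow_eq_zero_iff four_ne_zero |>.mp ((mul_eq_zero.mp h3p).resolve_left h3)

end SlopePolynomials

section Coordinates

variable {K : Type*} [Field K]

theorem three_mul_sub_first_coord (h3 : (3 : K) ≠ 0) (x y : K) :
    3 * ((x ^ 2 + x + 2 / 3) * x ^ 4 - (y ^ 2 + y + 2 / 3) * y ^ 4)
      = (x - y) * firstSlope (x + y) (x * y) := by
  unfold firstSlope
  field_simp
  ring

theorem three_mul_sub_second_coord (h3 : (3 : K) ≠ 0) {x y : K} (hx : x ≠ 0) (hy : y ≠ 0) :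
    3 * ((x ^ 2 - x + 1 / 3) * x ^ (-8 : ℤ) - (y ^ 2 - y + 1 / 3) * y ^ (-8 : ℤ)) * (x ^ 8 * y ^ 8)
      = (y - x) * secondSlope (x + y) (x * y) := by
  unfold secondSlope
  simp only [zpow_neg]
  field_simp
  ring

end Coordinates

theorem case_t_injective :
    Set.InjOn
      (fun t : ℂ =>
        ((t ^ 2 + t + 2 / 3) * t ^ 4,
         (t ^ 2 - t + 1 / 3) * t ^ (-8 : ℤ)))
      {t : ℂ | t ≠ 0} := by
  intro x (hx : x ≠ 0) y (hy : y ≠ 0) hxy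
  obtain ⟨h₁, h₂⟩ := Prod.mk.inj hxy
  have h3 : (3 : ℂ) ≠ 0 := three_ne_zero
  by_contra hne
  have hF : firstSlope (x + y) (x * y) = 0 := by
    have key := three_mul_sub_first_coord h3 x y
    rw [h₁, sub_self, mul_zero, eq_comm] at key
    exact (mul_eq_zero.mp key).resolve_left (sub_ne_zero.mpr hne)
  have hG : secondSlope (x + y) (x * y) = 0 := by
    have key := three_mul_sub_second_coord h3 hx hy
    rw [h₂, sub_self, mul_zero, zero_mul, eq_comm] at key
    exact (mul_eq_zero.mp key).resolve_left (sub_ne_zero.mpr (Ne.symm hne))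
  exact mul_ne_zero hx hy (eq_zero_of_firstSlope_eq_zero_of_secondSlope_eq_zero h3 hF hG)
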